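/- arXiv:1611.02335 — 3 statements merged into one kernel-verified Lean document; each statement's English description precedes it below -/
import Mathlib

section
/- Let (η(t))_{t≥0} be a stochastic process on a probability space with almost surely continuous sample paths whose finite-dimensional distributions are centered (mean-zero) Gaussian with covariance Cov(η(s),η(t)) = κ(|s−t|) for a stationary covariance function κ, and assume (A1): (κ(0) − κ(2^{−n}))^{−1} ≥ n^6 for all integers n ≥ 1. Then almost surely lim_{τ→∞} sup_{t≥τ} |η(t) h_d(t)| = 0; in particular, the sample path t ↦ h_d(t) η(t) almost surely belongs to the space 𝒞₀ of continuous functions from [0,∞) to ℝ tending to 0 at infinity. -/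
open MeasureTheory ProbabilityTheory Filter Topology
open scoped ENNReal NNReal

noncomputable section

/-- The function `h_d` of the paper: `h_d(t) = (d+1)/(1+log(1-e^{-1}))` for `t ≤ 1` and
`h_d(t) = (d+1)/(t+log(1-e^{-t}))` for `t > 1`. -/
def hfun (d : ℕ) (t : ℝ) : ℝ :=
  if t ≤ 1 then (d + 1) / (1 + Real.log (1 - Real.exp (-1)))
  else (d + 1) / (t + Real.log (1 - Real.exp (-t)))

/-- `η` is a stochastic process on `(W, P)` with almost surely continuous sample paths on
`[0,∞)`, whose finite-dimensional distributions are centered Gaussian with stationary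
covariance `Cov(η(s), η(t)) = κ(|s-t|)`; the finite-dimensional distributions are encoded by
requiring every finite linear combination `∑ cᵢ η(tᵢ)` to be a centered real Gaussian with
the corresponding variance `∑ᵢ∑ⱼ cᵢ cⱼ κ(|tᵢ-tⱼ|)`. -/
def IsCenteredStationaryGP {W : Type*} [MeasurableSpace W] (P : Measure W)
    (η : ℝ → W → ℝ) (κ : ℝ → ℝ) : Prop :=
  (∀ᵐ w ∂P, ContinuousOn (fun t => η t w) (Set.Ici 0)) ∧
  ∀ (n : ℕ) (t : Fin n → ℝ) (c : Fin n → ℝ), (∀ i, 0 ≤ t i) →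
    Measure.map (fun w => ∑ i, c i * η (t i) w) P =
      gaussianReal 0 (∑ i, ∑ j, c i * c j * κ |t i - t j|).toNNReal

/-- Assumption (A1): `(κ(0) - κ(2^{-n}))⁻¹ ≥ n⁶` for all integers `n ≥ 1`. -/
def AssumptionA1 (κ : ℝ → ℝ) : Prop :=
  ∀ n : ℕ, 1 ≤ n → ((n : ℝ))^6 ≤ (κ 0 - κ ((2:ℝ)^(-(n:ℤ))))⁻¹

/-!
By (A1), the increments of `η` between neighbouring dyadic points of level `m` have variance at
most `2 / m⁶`. Chernoff bounds then show that the event that, on `[k, k + 1]`, either `|η k|`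
exceeds `C √(log k)` or some level-`m` increment exceeds `4 √(log k) / m²` has probability
`O(k⁻²)`. By Borel–Cantelli almost surely none of these events occurs for large `k`, and chaining
along the dyadic points of `[k, k + 1]` yields `η(t) = O(√(log t))` on continuous sample paths.
Since `h_d(t) = O(1 / t)`, the product `h_d η` tends to `0`.
-/

open Real

lemma exp_neg_one_lt_one_sub_exp_neg_one : exp (-1) < 1 - exp (-1) := by
  have : 2 < exp 1 := by linarith [exp_one_gt_d9]
  rw [exp_neg]
  have : (exp 1)⁻¹ < 1 / 2 := by rw [inv_lt_comm₀ (by positivity) (by norm_num)]; linarith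
  linarith

lemma one_add_log_one_sub_exp_neg_one_pos : 0 < 1 + log (1 - exp (-1)) := by
  have h := exp_neg_one_lt_one_sub_exp_neg_one
  have : -1 < log (1 - exp (-1)) := by
    rwa [lt_log_iff_exp_lt (by linarith [exp_pos (-1)])]
  linarith

lemma one_sub_exp_neg_pos {s : ℝ} (hs : 1 ≤ s) : 0 < 1 - exp (-s) := by
  have : exp (-s) ≤ exp (-1) := exp_le_exp.2 (by linarith)
  linarith [exp_neg_one_lt_one_sub_exp_neg_one]

lemma mul_le_add_log_one_sub_exp_neg {s : ℝ} (hs : 1 ≤ s) :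
    (1 + log (1 - exp (-1))) * s ≤ s + log (1 - exp (-s)) := by
  have hlog : log (1 - exp (-1)) ≤ log (1 - exp (-s)) :=
    log_le_log (one_sub_exp_neg_pos le_rfl) (by gcongr)
  have hneg : log (1 - exp (-1)) ≤ 0 :=
    log_nonpos (one_sub_exp_neg_pos le_rfl).le (by simp [(exp_pos _).le])
  nlinarith

lemma hfun_eq_div_max (d : ℕ) (t : ℝ) :
    hfun d t = (d + 1) / (max t 1 + log (1 - exp (-max t 1))) := by
  unfold hfun
  split_ifs with h
  · rw [max_eq_right h]
  · rw [max_eq_left (not_le.1 h).le]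

lemma continuous_hfun (d : ℕ) : Continuous (hfun d) := by
  have hmax : Continuous fun t : ℝ => max t 1 := by fun_prop
  have hden : ∀ t : ℝ, 0 < max t 1 + log (1 - exp (-max t 1)) := fun t =>
    (mul_pos one_add_log_one_sub_exp_neg_one_pos (by positivity)).trans_le
      (mul_le_add_log_one_sub_exp_neg (le_max_right t 1))
  have hlog : Continuous fun t : ℝ => log (1 - exp (-max t 1)) :=
    (continuous_const.sub hmax.neg.rexp).log fun t => (one_sub_exp_neg_pos (le_max_right t 1)).ne'
  simp_rw [funext (hfun_eq_div_max d)]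
  exact continuous_const.div (hmax.add hlog) fun t => (hden t).ne'

lemma hfun_isBigO_inv (d : ℕ) : hfun d =O[atTop] fun t => t⁻¹ := by
  set δ := 1 + log (1 - exp (-1))
  have hδ : 0 < δ := one_add_log_one_sub_exp_neg_one_pos
  refine Asymptotics.IsBigO.of_bound ((d + 1) / δ) ?_
  filter_upwards [eventually_ge_atTop 1] with t ht
  have hpos : 0 < δ * t := by positivity
  have hden : δ * t ≤ t + log (1 - exp (-t)) := mul_le_add_log_one_sub_exp_neg ht
  rw [hfun_eq_div_max, max_eq_left ht, Real.norm_eq_abs, Real.norm_eq_abs,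
    abs_of_pos (div_pos (by positivity) (hpos.trans_le hden)), abs_of_pos (by positivity),
    ← div_eq_mul_inv, div_div]
  gcongr

lemma tendsto_inv_mul_sqrt_log_add_two :
    Tendsto (fun t : ℝ => t⁻¹ * √(log (t + 2))) atTop (𝓝 0) := by
  have hlim : Tendsto (fun t : ℝ => 2 * (√t)⁻¹) atTop (𝓝 0) := by
    simpa using (tendsto_inv_atTop_zero.comp tendsto_sqrt_atTop).const_mul 2
  refine squeeze_zero' ?_ ?_ hlim
  · filter_upwards [eventually_ge_atTop 0] with t ht
    positivity
  · filter_upwards [eventually_ge_atTop 2] with t ht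
    have hst : 0 < √t := sqrt_pos.2 (by linarith)
    have hlog : √(log (t + 2)) ≤ 2 * √t := by
      calc √(log (t + 2)) ≤ √(4 * t) :=
            sqrt_le_sqrt (by linarith [log_le_sub_one_of_pos (show 0 < t + 2 by linarith)])
        _ = 2 * √t := by
            rw [sqrt_mul (by norm_num), show (4 : ℝ) = 2 ^ 2 by norm_num, sqrt_sq (by norm_num)]
    calc t⁻¹ * √(log (t + 2)) ≤ t⁻¹ * (2 * √t) := by gcongr
      _ = 2 * (√t)⁻¹ := by
        nth_rw 1 [← mul_self_sqrt (show 0 ≤ t by linarith)]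
        field_simp

lemma tendsto_iSup_nnnorm_of_tendsto_zero {E : Type*} [SeminormedAddCommGroup E] {f : ℝ → E}
    (hf : Tendsto f atTop (𝓝 0)) :
    Tendsto (fun τ : ℝ => ⨆ t : {s : ℝ // τ ≤ s}, (‖f t‖₊ : ℝ≥0∞)) atTop (𝓝 0) := by
  have hg : Tendsto (fun t => (‖f t‖₊ : ℝ≥0∞)) atTop (𝓝 0) :=
    ENNReal.tendsto_coe.2 (nnnorm_zero (E := E) ▸ hf.nnnorm)
  rw [ENNReal.tendsto_nhds_zero] at hg ⊢
  intro ε hε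
  obtain ⟨T, hT⟩ := eventually_atTop.1 (hg ε hε)
  filter_upwards [eventually_ge_atTop T] with τ hτ
  exact iSup_le fun t => hT t (hτ.trans t.2)

namespace ProbabilityTheory

variable {Ω : Type*} [MeasurableSpace Ω] {μ : Measure Ω} {X : Ω → ℝ} {c : ℝ≥0}

lemma hasSubgaussianMGF_of_map_eq_gaussianReal {v : ℝ≥0} (h : μ.map X = gaussianReal 0 v) :
    HasSubgaussianMGF X v μ := by
  have hX : AEMeasurable X μ := aemeasurable_of_map_neZero (by rw [h]; infer_instance)
  rw [← HasSubgaussianMGF.id_map_iff hX, h]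
  exact ⟨integrable_exp_mul_gaussianReal, fun t => by simp [mgf_id_gaussianReal]⟩

lemma HasSubgaussianMGF.mono {c' : ℝ≥0} (h : HasSubgaussianMGF X c μ) (hc : c ≤ c') :
    HasSubgaussianMGF X c' μ :=
  ⟨h.integrable_exp_mul, fun t => (h.mgf_le t).trans (exp_le_exp.2 (by gcongr))⟩

lemma HasSubgaussianMGF.measure_abs_ge_le [IsFiniteMeasure μ] (h : HasSubgaussianMGF X c μ)
    {ε : ℝ} (hε : 0 ≤ ε) :
    μ {ω | ε ≤ |X ω|} ≤ ENNReal.ofReal (2 * exp (-ε ^ 2 / (2 * c))) := by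
  have hsplit : {ω | ε ≤ |X ω|} = {ω | ε ≤ X ω} ∪ {ω | ε ≤ (-X) ω} := by
    ext ω
    simp only [Set.mem_ofPred_eq, Set.mem_union, Pi.neg_apply, le_abs, le_neg]
  rw [← ofReal_measureReal, hsplit, two_mul]
  refine ENNReal.ofReal_le_ofReal ((measureReal_union_le _ _).trans ?_)
  exact add_le_add (h.measure_ge_le hε) (h.neg.measure_ge_le hε)

end ProbabilityTheory

def dyadicIncrement (f : ℝ → ℝ) (m j : ℕ) : ℝ := f ((j + 1) / 2 ^ m) - f (j / 2 ^ m)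

section DyadicChaining

variable {f : ℝ → ℝ} {ε : ℕ → ℝ}

lemma abs_sub_dyadic_parent_le (hε : ∀ n j, j < 2 ^ (n + 1) → |dyadicIncrement f (n + 1) j| ≤ ε n)
    {n j : ℕ} (hj : j < 2 ^ (n + 1)) :
    |f (j / 2 ^ (n + 1)) - f ((j / 2 : ℕ) / 2 ^ n)| ≤ ε n := by
  have hparent : ((j / 2 : ℕ) : ℝ) / 2 ^ n = (2 * (j / 2 : ℕ) : ℕ) / 2 ^ (n + 1) := by
    push_cast; rw [pow_succ]; field_simp
  rcases Nat.mod_two_eq_zero_or_one j with h | h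
  · have hj2 : 2 * (j / 2) = j := by omega
    rw [hparent, hj2, sub_self, abs_zero]
    exact (abs_nonneg _).trans (hε n 0 (by positivity))
  · have hj2 : j = 2 * (j / 2) + 1 := by omega
    have := hε n (2 * (j / 2)) (by omega)
    rw [hparent]
    nth_rw 1 [hj2]
    simpa [dyadicIncrement] using this

lemma abs_sub_le_sum_of_dyadicIncrement_le
    (hε : ∀ n j, j < 2 ^ (n + 1) → |dyadicIncrement f (n + 1) j| ≤ ε n) :
    ∀ m j : ℕ, j < 2 ^ m → |f (j / 2 ^ m) - f 0| ≤ ∑ n ∈ Finset.range m, ε n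
  | 0, j, hj => by simp [Nat.lt_one_iff.1 (by simpa using hj)]
  | m + 1, j, hj => by
    have hparent := abs_sub_le_sum_of_dyadicIncrement_le hε m (j / 2) (by omega)
    rw [Finset.sum_range_succ]
    calc |f (j / 2 ^ (m + 1)) - f 0|
        ≤ |f (j / 2 ^ (m + 1)) - f ((j / 2 : ℕ) / 2 ^ m)| + |f ((j / 2 : ℕ) / 2 ^ m) - f 0| :=
          abs_sub_le _ _ _
      _ ≤ _ := by linarith [abs_sub_dyadic_parent_le hε hj]

lemma abs_sub_le_of_dyadicIncrement_le {S : ℝ} (hf : ContinuousOn f (Set.Icc 0 1))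
    (hε : ∀ n j, j < 2 ^ (n + 1) → |dyadicIncrement f (n + 1) j| ≤ ε n)
    (hS : ∀ N, ∑ n ∈ Finset.range N, ε n ≤ S) {t : ℝ} (ht : t ∈ Set.Ico 0 1) :
    |f t - f 0| ≤ S := by
  set p : ℕ → ℝ := fun m => ⌊t * 2 ^ m⌋₊ / 2 ^ m
  have hp_mem : ∀ m, p m ∈ Set.Icc 0 1 := fun m =>
    ⟨by positivity, (div_le_iff₀ (by positivity)).2
      ((Nat.floor_le (by have := ht.1; positivity)).trans
        (by nlinarith [ht.2, pow_pos (two_pos (α := ℝ)) m]))⟩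
  have hp_tendsto : Tendsto p atTop (𝓝 t) :=
    (tendsto_nat_floor_mul_div_atTop ht.1).comp
      (tendsto_pow_atTop_atTop_of_one_lt one_lt_two)
  have hfp : Tendsto (fun m => f (p m)) atTop (𝓝 (f t)) :=
    (hf t (Set.Ico_subset_Icc_self ht)).tendsto.comp
      (tendsto_nhdsWithin_iff.2 ⟨hp_tendsto, Eventually.of_forall hp_mem⟩)
  refine le_of_tendsto' ((hfp.sub_const (f 0)).abs) fun m => ?_
  have hfloor : ⌊t * 2 ^ m⌋₊ < 2 ^ m := by
    rw [Nat.floor_lt (by have := ht.1; positivity)]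
    push_cast
    nlinarith [ht.2, pow_pos (two_pos (α := ℝ)) m]
  exact (abs_sub_le_sum_of_dyadicIncrement_le hε m _ hfloor).trans (hS m)

end DyadicChaining

namespace IsCenteredStationaryGP

variable {W : Type*} [MeasurableSpace W] {P : Measure W} {η : ℝ → W → ℝ} {κ : ℝ → ℝ}

lemma map_eval (hGP : IsCenteredStationaryGP P η κ) {s : ℝ} (hs : 0 ≤ s) :
    P.map (η s) = gaussianReal 0 (κ 0).toNNReal := by
  simpa using hGP.2 1 ![s] ![1] (by simpa using hs)

lemma map_sub (hGP : IsCenteredStationaryGP P η κ) {s u : ℝ} (hs : 0 ≤ s) (hu : 0 ≤ u) :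
    P.map (fun w => η s w - η u w) = gaussianReal 0 (2 * (κ 0 - κ |s - u|)).toNNReal := by
  have h := hGP.2 2 ![s, u] ![1, -1] (by simp [Fin.forall_fin_two, hs, hu])
  simp only [Fin.sum_univ_two, Matrix.cons_val_zero, Matrix.cons_val_one, sub_self, abs_zero,
    abs_sub_comm u s] at h
  convert h using 3
  · ring
  · ring_nf

end IsCenteredStationaryGP

lemma AssumptionA1.sub_le_inv_pow {κ : ℝ → ℝ} (hA1 : AssumptionA1 κ) {m : ℕ} (hm : 1 ≤ m) :
    κ 0 - κ (2 ^ m)⁻¹ ≤ ((m : ℝ) ^ 6)⁻¹ := by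
  have h := hA1 m hm
  rw [zpow_neg, zpow_natCast] at h
  have hm6 : (0 : ℝ) < (m : ℝ) ^ 6 := by positivity
  have hpos : 0 < κ 0 - κ (2 ^ m)⁻¹ := inv_pos.1 (hm6.trans_le h)
  exact (le_inv_comm₀ hpos hm6).2 h

-- The right-hand side has the shape of the terms of `tsum_geometric_two'`.
lemma two_pow_mul_exp_neg_le {L : ℝ} (hL : log 2 ≤ L) (n : ℕ) :
    2 ^ (n + 1) * (2 * exp (-(4 * ((n + 1 : ℕ) : ℝ) ^ 2 * L))) ≤
      2 * exp (-(2 * L)) / 2 / 2 ^ n := by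
  have hL0 : 0 ≤ L := (log_nonneg one_le_two).trans hL
  have h4 : (2 : ℝ) ^ (n + 1) * 2 ^ (n + 1) ≤ exp ((2 * n + 2) * L) := by
    calc (2 : ℝ) ^ (n + 1) * 2 ^ (n + 1) = exp ((2 * n + 2) * log 2) := by
          rw [← pow_add, ← exp_log (pow_pos two_pos _), log_pow]
          push_cast
          ring_nf
      _ ≤ exp ((2 * n + 2) * L) := by gcongr
  have hexp :
      exp ((2 * n + 2) * L) * exp (-(4 * ((n + 1 : ℕ) : ℝ) ^ 2 * L)) ≤ exp (-(2 * L)) := by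
    rw [← exp_add, exp_le_exp]
    push_cast
    nlinarith [sq_nonneg (n : ℝ), (n.cast_nonneg : (0 : ℝ) ≤ n)]
  rw [div_div, le_div_iff₀ (by positivity)]
  calc 2 ^ (n + 1) * (2 * exp (-(4 * ((n + 1 : ℕ) : ℝ) ^ 2 * L))) * (2 * 2 ^ n)
      = 2 * (2 ^ (n + 1) * 2 ^ (n + 1) * exp (-(4 * ((n + 1 : ℕ) : ℝ) ^ 2 * L))) := by ring
    _ ≤ 2 * exp (-(2 * L)) := by
        gcongr
        exact (mul_le_mul_of_nonneg_right h4 (exp_pos _).le).trans hexp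

/-- By (A1) a dyadic increment of level `m` has variance at most `2 / m⁶`, so it exceeds
`4 √(log (k + 2)) / m²` with probability at most `2 (k + 2)^(-4 m²)`; these thresholds are
summable in `m`. -/
def blockExceedance {W : Type*} (η : ℝ → W → ℝ) (κ : ℝ → ℝ) (k : ℕ) : Set W :=
  {w | 2 * √((κ 0).toNNReal + 1) * √(log (k + 2)) ≤ |η k w|} ∪
    ⋃ n : ℕ, ⋃ j ∈ Finset.range (2 ^ (n + 1)),
      {w | 4 / ((n + 1 : ℕ) : ℝ) ^ 2 * √(log (k + 2)) ≤
        |dyadicIncrement (fun s => η (k + s) w) (n + 1) j|}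

section Exceedance

variable {W : Type*} [MeasurableSpace W] {P : Measure W} [IsProbabilityMeasure P]
  {η : ℝ → W → ℝ} {κ : ℝ → ℝ}

lemma measure_abs_eval_ge_le (hGP : IsCenteredStationaryGP P η κ) {s : ℝ} (hs : 0 ≤ s)
    {L : ℝ} (hL : 0 ≤ L) :
    P {w | 2 * √((κ 0).toNNReal + 1) * √L ≤ |η s w|} ≤ ENNReal.ofReal (2 * exp (-(2 * L))) := by
  set c : ℝ≥0 := (κ 0).toNNReal + 1
  have hsub : HasSubgaussianMGF (η s) c P :=
    (hasSubgaussianMGF_of_map_eq_gaussianReal (hGP.map_eval hs)).mono le_self_add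
  have hc : (0 : ℝ) < c := by positivity
  have hexp : -(2 * √c * √L) ^ 2 / (2 * c) = -(2 * L) := by
    rw [mul_pow, mul_pow, sq_sqrt hc.le, sq_sqrt hL]
    field_simp
  rw [← hexp]
  exact hsub.measure_abs_ge_le (by positivity)

lemma measure_abs_dyadicIncrement_ge_le (hGP : IsCenteredStationaryGP P η κ)
    (hA1 : AssumptionA1 κ) {a : ℝ} (ha : 0 ≤ a) {L : ℝ} (hL : 0 ≤ L) {m : ℕ} (hm : 1 ≤ m)
    (j : ℕ) :
    P {w | 4 / (m : ℝ) ^ 2 * √L ≤ |dyadicIncrement (fun s => η (a + s) w) m j|} ≤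
      ENNReal.ofReal (2 * exp (-(4 * m ^ 2 * L))) := by
  have hgap : |(a + (j + 1) / 2 ^ m) - (a + j / 2 ^ m)| = (2 ^ m)⁻¹ := by
    rw [abs_of_nonneg (by ring_nf; positivity)]
    field_simp
    ring
  have hlaw := hGP.map_sub (s := a + (j + 1) / 2 ^ m) (u := a + j / 2 ^ m)
    (by positivity) (by positivity)
  rw [hgap] at hlaw
  set c : ℝ≥0 := 2 / (m : ℝ≥0) ^ 6
  have hvar : (2 * (κ 0 - κ (2 ^ m)⁻¹)).toNNReal ≤ c := by
    rw [Real.toNNReal_le_iff_le_coe]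
    have := hA1.sub_le_inv_pow hm
    simp only [c, NNReal.coe_div, NNReal.coe_pow, NNReal.coe_natCast, NNReal.coe_ofNat]
    rw [div_eq_mul_inv]
    linarith
  have hsub := (hasSubgaussianMGF_of_map_eq_gaussianReal hlaw).mono hvar
  have hexp : -(4 / (m : ℝ) ^ 2 * √L) ^ 2 / (2 * c) = -(4 * m ^ 2 * L) := by
    simp only [c, NNReal.coe_div, NNReal.coe_pow, NNReal.coe_natCast, NNReal.coe_ofNat]
    rw [mul_pow, sq_sqrt hL]
    field_simp
    ring
  rw [← hexp]
  exact hsub.measure_abs_ge_le (by positivity)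

lemma measure_blockExceedance_le (hGP : IsCenteredStationaryGP P η κ) (hA1 : AssumptionA1 κ)
    (k : ℕ) : P (blockExceedance η κ k) ≤ ENNReal.ofReal (4 * exp (-(2 * log (k + 2)))) := by
  set L := log ((k : ℝ) + 2)
  have hL : log 2 ≤ L := log_le_log two_pos (by linarith [k.cast_nonneg (α := ℝ)])
  have hL0 : 0 ≤ L := (log_nonneg one_le_two).trans hL
  have hlevel : ∀ n : ℕ, ∑ j ∈ Finset.range (2 ^ (n + 1)),
      P {w | 4 / ((n + 1 : ℕ) : ℝ) ^ 2 * √L ≤ |dyadicIncrement (fun s => η (k + s) w) (n + 1) j|}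
        ≤ ENNReal.ofReal (2 * exp (-(2 * L)) / 2 / 2 ^ n) := fun n =>
    calc _ ≤ ∑ j ∈ Finset.range (2 ^ (n + 1)),
          ENNReal.ofReal (2 * exp (-(4 * ((n + 1 : ℕ) : ℝ) ^ 2 * L))) :=
          Finset.sum_le_sum fun j _ => measure_abs_dyadicIncrement_ge_le hGP hA1 k.cast_nonneg hL0
            (Nat.le_add_left 1 n) j
      _ = ENNReal.ofReal (2 ^ (n + 1) * (2 * exp (-(4 * ((n + 1 : ℕ) : ℝ) ^ 2 * L)))) := by
          rw [Finset.sum_const, Finset.card_range, nsmul_eq_mul, ← ENNReal.ofReal_natCast,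
            ← ENNReal.ofReal_mul (by positivity)]
          push_cast
          rfl
      _ ≤ _ := ENNReal.ofReal_le_ofReal (two_pow_mul_exp_neg_le hL n)
  calc P (blockExceedance η κ k)
      ≤ ENNReal.ofReal (2 * exp (-(2 * L))) +
          ∑' n : ℕ, ENNReal.ofReal (2 * exp (-(2 * L)) / 2 / 2 ^ n) :=
        (measure_union_le _ _).trans <|
          add_le_add (measure_abs_eval_ge_le hGP k.cast_nonneg hL0) <|
            (measure_iUnion_le _).trans <| ENNReal.tsum_le_tsum fun n =>
              (measure_biUnion_finset_le _ _).trans (hlevel n)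
    _ = ENNReal.ofReal (4 * exp (-(2 * L))) := by
        rw [← ENNReal.ofReal_tsum_of_nonneg (fun n => by positivity) (summable_geometric_two' _),
          tsum_geometric_two', ← ENNReal.ofReal_add (by positivity) (by positivity)]
        ring_nf

lemma ae_eventually_notMem_blockExceedance (hGP : IsCenteredStationaryGP P η κ)
    (hA1 : AssumptionA1 κ) : ∀ᵐ w ∂P, ∀ᶠ k in atTop, w ∉ blockExceedance η κ k := by
  have hsum : Summable fun k : ℕ => 4 * exp (-(2 * log ((k : ℝ) + 2))) := by
    have := ((summable_nat_add_iff 2).2 (Real.summable_nat_pow_inv.2 one_lt_two)).mul_left 4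
    refine this.congr fun k => ?_
    rw [exp_neg, ← Nat.cast_ofNat (R := ℝ) (n := 2), ← log_pow, exp_log (by positivity)]
    push_cast
    rfl
  refine ae_eventually_notMem (ne_top_of_le_ne_top ?_
    (ENNReal.tsum_le_tsum (measure_blockExceedance_le hGP hA1)))
  rw [← ENNReal.ofReal_tsum_of_nonneg (fun k => by positivity) hsum]
  exact ENNReal.ofReal_ne_top

end Exceedance

lemma sum_range_inv_succ_sq_le_two (N : ℕ) :
    ∑ n ∈ Finset.range N, (((n + 1 : ℕ) : ℝ) ^ 2)⁻¹ ≤ 2 := by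
  have h := sum_Ioo_inv_sq_le (α := ℝ) 0 (N + 1)
  rw [← Finset.Ico_add_one_left_eq_Ioo, Finset.sum_Ico_eq_sum_range] at h
  simpa [add_comm] using h

lemma abs_le_of_notMem_blockExceedance {W : Type*} {η : ℝ → W → ℝ} {κ : ℝ → ℝ} {w : W}
    (hcont : ContinuousOn (fun t => η t w) (Set.Ici 0)) {k : ℕ} (hw : w ∉ blockExceedance η κ k)
    {t : ℝ} (ht : t ∈ Set.Ico (k : ℝ) (k + 1)) :
    |η t w| ≤ (2 * √((κ 0).toNNReal + 1) + 8) * √(log (k + 2)) := by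
  set L := log ((k : ℝ) + 2)
  simp only [blockExceedance, Set.mem_union, Set.mem_iUnion, Set.mem_ofPred_eq, not_or,
    not_exists, not_le] at hw
  obtain ⟨hk, hinc⟩ := hw
  have hf : ContinuousOn (fun s => η (k + s) w) (Set.Icc 0 1) :=
    hcont.comp (by fun_prop) fun s hs => by
      simp only [Set.mem_Ici]; linarith [hs.1, k.cast_nonneg (α := ℝ)]
  have hosc : |η t w - η k w| ≤ 8 * √L := by
    have := abs_sub_le_of_dyadicIncrement_le hf
      (ε := fun n => 4 / ((n + 1 : ℕ) : ℝ) ^ 2 * √L)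
      (fun n j hj => (hinc n j (Finset.mem_range.2 hj)).le)
      (fun N => calc
        _ = 4 * √L * ∑ n ∈ Finset.range N, (((n + 1 : ℕ) : ℝ) ^ 2)⁻¹ := by
          rw [Finset.mul_sum]; exact Finset.sum_congr rfl fun n _ => by ring
        _ ≤ 4 * √L * 2 := by gcongr; exact sum_range_inv_succ_sq_le_two N
        _ = 8 * √L := by ring)
      (t := t - k) ⟨sub_nonneg.2 ht.1, by linarith [ht.2]⟩
    simpa using this
  linarith [abs_sub_abs_le_abs_sub (η t w) (η k w)]

lemma ae_isBigO_sqrt_log {W : Type*} [MeasurableSpace W] {P : Measure W} [IsProbabilityMeasure P]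
    {η : ℝ → W → ℝ} {κ : ℝ → ℝ} (hGP : IsCenteredStationaryGP P η κ) (hA1 : AssumptionA1 κ) :
    ∀ᵐ w ∂P, (fun t => η t w) =O[atTop] fun t => √(log (t + 2)) := by
  filter_upwards [hGP.1, ae_eventually_notMem_blockExceedance hGP hA1] with w hcont hgood
  refine Asymptotics.IsBigO.of_bound (2 * √((κ 0).toNNReal + 1) + 8) ?_
  filter_upwards [tendsto_nat_floor_atTop.eventually hgood, eventually_ge_atTop 0] with t ht ht0
  rw [Real.norm_eq_abs, Real.norm_of_nonneg (sqrt_nonneg _)]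
  have ht_mem : t ∈ Set.Ico (⌊t⌋₊ : ℝ) (⌊t⌋₊ + 1) := ⟨Nat.floor_le ht0, Nat.lt_floor_add_one t⟩
  refine (abs_le_of_notMem_blockExceedance hcont ht ht_mem).trans ?_
  gcongr
  exact Nat.floor_le ht0

theorem gp_weighted_path_vanishes_at_infinity_general
    {d : ℕ}
    {W : Type*} [MeasurableSpace W] (P : Measure W) [IsProbabilityMeasure P]
    (η : ℝ → W → ℝ) (κ : ℝ → ℝ)
    (hGP : IsCenteredStationaryGP P η κ)
    (hA1 : AssumptionA1 κ) :
    ∀ᵐ w ∂P,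
      (Tendsto (fun τ : ℝ => ⨆ t : {s : ℝ // τ ≤ s}, (‖η (t : ℝ) w * hfun d (t : ℝ)‖₊ : ℝ≥0∞))
        atTop (𝓝 0)) ∧
      ContinuousOn (fun t => hfun d t * η t w) (Set.Ici 0) ∧
      Tendsto (fun t => hfun d t * η t w) atTop (𝓝 0) := by
  filter_upwards [hGP.1, ae_isBigO_sqrt_log hGP hA1] with w hcont hgrowth
  have hlim : Tendsto (fun t => hfun d t * η t w) atTop (𝓝 0) :=
    ((hfun_isBigO_inv d).mul hgrowth).trans_tendsto tendsto_inv_mul_sqrt_log_add_two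
  refine ⟨?_, (continuous_hfun d).continuousOn.mul hcont, hlim⟩
  simpa only [mul_comm] using tendsto_iSup_nnnorm_of_tendsto_zero hlim

/-- Under (A1), almost surely `sup_{t ≥ τ} |η(t) h_d(t)| → 0` as `τ → ∞`; in particular the
sample path `t ↦ h_d(t) η(t)` almost surely belongs to `𝒞₀`, i.e. it is continuous on `[0,∞)`
and tends to `0` at infinity. -/
theorem gp_weighted_path_vanishes_at_infinity
    {d : ℕ} (hd1 : 1 ≤ d)
    {W : Type*} [MeasurableSpace W] (P : Measure W) [IsProbabilityMeasure P]
    (η : ℝ → W → ℝ) (κ : ℝ → ℝ)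
    (hGP : IsCenteredStationaryGP P η κ)
    (hA1 : AssumptionA1 κ) :
    ∀ᵐ w ∂P,
      (Tendsto (fun τ : ℝ => ⨆ t : {s : ℝ // τ ≤ s}, (‖η (t : ℝ) w * hfun d (t : ℝ)‖₊ : ℝ≥0∞))
        atTop (𝓝 0)) ∧
      ContinuousOn (fun t => hfun d t * η t w) (Set.Ici 0) ∧
      Tendsto (fun t => hfun d t * η t w) atTop (𝓝 0) :=
  gp_weighted_path_vanishes_at_infinity_general P η κ hGP hA1

end
end

section
/- Let θ₀ = (Ω₀, η_{0,0}, …, η_{d,0}) with Ω₀ > 0 and the η_{j,0} : [0,∞) → ℝ continuous, and assume f_x(·,θ₀) is a probability density on [0,∞) for every x ∈ [0,1]^d. Let Q be a Borel probability measure on [0,1]^d and assume (A3): ∫_{[0,1]^d} ∫_0^∞ t f_x(t,θ₀) dt Q(dx) < ∞. Then for every ε ∈ (0,1) there exist δ(ε) ∈ (0,1/2) and τ(ε) > 1 such that for every τ ≥ τ(ε) and every parameter θ = (Ω, η_0, …, η_d) ∈ B_{δ(ε),τ} (with Ω > 0 and the η_j continuous), ∫_{[0,1]^d} ∫_0^∞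 log(f_x(t,θ₀)/f_x(t,θ)) f_x(t,θ₀) dt Q(dx) < ε. -/
/-!
With `Λ_θ(t) = ∫₀ᵗ Ω σ(Y_x(s)) ds` the cumulative hazard,
`log (f_x(t,θ₀)/f_x(t,θ)) = log (Ω₀/Ω) + (log σ(Y⁰_x(t)) - log σ(Y_x(t))) + (Λ_θ(t) - Λ_{θ₀}(t))`.
On `[0, τ]` the parameters are `δ`-close and `σ`, `log σ` are 1-Lipschitz, so the log-ratio is
`O(δ (1 + t))`. Beyond `τ` the lower bound on `η_j h_d` gives `σ(Y_x(t)) ≥ e⁻ᵗ`, so the log-ratio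
is `O(t)`. Integrated against `f_x(t,θ₀) dt Q(dx)`, the first part is `O(δ)` by (A3), and the
second is a multiple of the tail `∫∫_{t>τ} t f_x(t,θ₀)`, which tends to `0` as `τ → ∞` by
dominated convergence on the product `Q ⊗ dt`.
-/

open MeasureTheory ProbabilityTheory Filter Topology
open scoped ENNReal NNReal

noncomputable section

/-- The sigmoid (logistic) function `σ(x) = 1/(1+e^{-x})`. -/
def sigmoid (y : ℝ) : ℝ := 1 / (1 + Real.exp (-y))

/-- `Y_x(t) = η₀(t) + ∑_{j=1}^d x_j η_j(t)`. -/
def Yproc {d : ℕ} (η : Fin (d + 1) → ℝ → ℝ) (x : Fin d → ℝ) (t : ℝ) : ℝ :=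
  η 0 t + ∑ j : Fin d, x j * η j.succ t

/-- The survival density `f_x(t,θ) = Ω σ(Y_x(t)) exp(-∫₀ᵗ Ω σ(Y_x(s)) ds)` for `t ≥ 0`
(and `0` for `t < 0`), for a parameter `θ = (Ω, η)`. -/
def dens {d : ℕ} (θ : ℝ × (Fin (d + 1) → ℝ → ℝ)) (x : Fin d → ℝ) (t : ℝ) : ℝ :=
  if 0 ≤ t then
    θ.1 * sigmoid (Yproc θ.2 x t) *
      Real.exp (-(∫ s in (0:ℝ)..t, θ.1 * sigmoid (Yproc θ.2 x s)))
  else 0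

/-- The unit cube `[0,1]^d` of covariates. -/
def unitCube (d : ℕ) : Set (Fin d → ℝ) := Set.univ.pi fun _ => Set.Icc (0:ℝ) 1

/-- Membership in the set `B_{δ,τ}`: `|Ω/Ω₀ - 1| < δ`, `sup_{[0,τ]}|η_j - η_{j,0}| ≤ δ/(1+τ)`
for every `j`, and `inf_{t>τ} η_j(t) h_d(t) > -1` for every `j`. -/
def memB {d : ℕ} (Ω₀ : ℝ) (η₀ : Fin (d + 1) → ℝ → ℝ) (δ τ : ℝ)
    (θ : ℝ × (Fin (d + 1) → ℝ → ℝ)) : Prop :=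
  |θ.1 / Ω₀ - 1| < δ ∧
  (∀ j, ∀ t ∈ Set.Icc (0:ℝ) τ, |θ.2 j t - η₀ j t| ≤ δ / (1 + τ)) ∧
  (∀ j, ∃ c : ℝ, -1 < c ∧ ∀ t ∈ Set.Ioi τ, c ≤ θ.2 j t * hfun d t)

lemma abs_sub_le_of_hasDerivAt_of_abs_le_one {f f' : ℝ → ℝ} (hf : ∀ y, HasDerivAt f (f' y) y)
    (hf' : ∀ y, |f' y| ≤ 1) (a b : ℝ) : |f a - f b| ≤ |a - b| := by
  have hlip : LipschitzWith 1 f := by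
    refine lipschitzWith_of_nnnorm_deriv_le (fun y => (hf y).differentiableAt) fun y => ?_
    rw [(hf y).deriv, ← NNReal.coe_le_coe, coe_nnnorm, NNReal.coe_one, Real.norm_eq_abs]
    exact hf' y
  simpa [← Real.dist_eq] using hlip.dist_le_mul a b

lemma sigmoid_eq_real_sigmoid : sigmoid = Real.sigmoid := by
  funext y; rw [sigmoid, Real.sigmoid_def, one_div]

lemma sigmoid_pos (y : ℝ) : 0 < sigmoid y :=
  sigmoid_eq_real_sigmoid ▸ Real.sigmoid_pos y

lemma sigmoid_le_one (y : ℝ) : sigmoid y ≤ 1 :=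
  sigmoid_eq_real_sigmoid ▸ Real.sigmoid_le_one y

lemma abs_sigmoid_sub_le (a b : ℝ) : |sigmoid a - sigmoid b| ≤ |a - b| := by
  rw [sigmoid_eq_real_sigmoid]
  refine abs_sub_le_of_hasDerivAt_of_abs_le_one Real.hasDerivAt_sigmoid (fun y => ?_) a b
  rw [abs_le]
  constructor <;> nlinarith [Real.sigmoid_pos y, Real.sigmoid_lt_one y]

lemma abs_log_sigmoid_sub_le (a b : ℝ) :
    |Real.log (sigmoid a) - Real.log (sigmoid b)| ≤ |a - b| := by
  rw [sigmoid_eq_real_sigmoid]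
  refine abs_sub_le_of_hasDerivAt_of_abs_le_one (f := fun y => Real.log (Real.sigmoid y))
    (f' := fun y => 1 - Real.sigmoid y)
    (fun y => ?_) (fun y => ?_) a b
  · convert (Real.hasDerivAt_sigmoid y).log (Real.sigmoid_pos y).ne' using 1
    field_simp [(Real.sigmoid_pos y).ne']
  · rw [abs_le]
    constructor <;> linarith [Real.sigmoid_pos y, Real.sigmoid_lt_one y]

lemma sigmoid_neg_log_exp_sub_one {t : ℝ} (ht : 0 < t) :
    sigmoid (-Real.log (Real.exp t - 1)) = Real.exp (-t) := by
  have h1 : 0 < Real.exp t - 1 := by linarith [Real.add_one_lt_exp ht.ne']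
  rw [sigmoid, neg_neg, Real.exp_log h1, Real.exp_neg]
  ring

lemma hfun_of_one_lt (d : ℕ) {t : ℝ} (ht : 1 < t) :
    hfun d t = (d + 1) / Real.log (Real.exp t - 1) := by
  have h1 : 0 < 1 - Real.exp (-t) := by
    linarith [Real.exp_lt_one_iff.2 (show -t < 0 by linarith)]
  have hsplit : Real.exp t - 1 = Real.exp t * (1 - Real.exp (-t)) := by
    rw [mul_sub, mul_one, ← Real.exp_add, add_neg_cancel, Real.exp_zero]
  rw [hfun, if_neg ht.not_ge, hsplit, Real.log_mul (Real.exp_pos t).ne' h1.ne', Real.log_exp]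

lemma log_exp_sub_one_pos {t : ℝ} (ht : 1 < t) : 0 < Real.log (Real.exp t - 1) :=
  Real.log_pos (by linarith [Real.add_one_lt_exp (show t ≠ 0 by linarith)])

lemma abs_sub_le_mul_of_abs_div_sub_one_lt {Ω₀ Ω δ : ℝ} (hΩ₀ : 0 < Ω₀)
    (hΩ : |Ω / Ω₀ - 1| < δ) : |Ω - Ω₀| ≤ δ * Ω₀ := by
  have : Ω - Ω₀ = Ω₀ * (Ω / Ω₀ - 1) := by field_simp
  rw [this, abs_mul, abs_of_pos hΩ₀, mul_comm]
  exact mul_le_mul_of_nonneg_right hΩ.le hΩ₀.le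

lemma log_sub_log_le_two_mul {Ω₀ Ω δ : ℝ} (hΩ₀ : 0 < Ω₀) (hδ : δ ≤ 1/2)
    (hΩ : |Ω - Ω₀| ≤ δ * Ω₀) : Real.log Ω₀ - Real.log Ω ≤ 2 * δ := by
  have hlo : (1 - δ) * Ω₀ ≤ Ω := by linarith [(abs_le.1 hΩ).1]
  have hδ0 : 0 ≤ δ := (mul_nonneg_iff_of_pos_right hΩ₀).1 ((abs_nonneg _).trans hΩ)
  have h1δ : 0 < 1 - δ := by linarith
  have hlog : -(2 * δ) ≤ Real.log (1 - δ) := by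
    have : (1 - δ)⁻¹ ≤ 1 + 2 * δ := by
      rw [inv_le_iff_one_le_mul₀ h1δ]
      nlinarith
    linarith [Real.one_sub_inv_le_log_of_pos h1δ]
  have := Real.log_le_log (by positivity) hlo
  rw [Real.log_mul h1δ.ne' hΩ₀.ne'] at this
  linarith

lemma mem_unitCube {d : ℕ} {x : Fin d → ℝ} : x ∈ unitCube d ↔ ∀ j, x j ∈ Set.Icc (0:ℝ) 1 :=
  Set.mem_univ_pi

lemma abs_Yproc_sub_le {d : ℕ} {η η' : Fin (d + 1) → ℝ → ℝ} {x : Fin d → ℝ}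
    (hx : x ∈ unitCube d) {s c : ℝ} (h : ∀ j, |η j s - η' j s| ≤ c) :
    |Yproc η x s - Yproc η' x s| ≤ (d + 1) * c := by
  have hterm : ∀ j : Fin d, |x j * η j.succ s - x j * η' j.succ s| ≤ c := fun j => by
    obtain ⟨hx0, hx1⟩ := mem_unitCube.1 hx j
    rw [← mul_sub, abs_mul, abs_of_nonneg hx0]
    nlinarith [h j.succ, abs_nonneg (η j.succ s - η' j.succ s)]
  calc |Yproc η x s - Yproc η' x s|
      = |(η 0 s - η' 0 s) + ∑ j, (x j * η j.succ s - x j * η' j.succ s)| := by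
        rw [Yproc, Yproc, Finset.sum_sub_distrib]; ring_nf
    _ ≤ c + ∑ _j : Fin d, c :=
        (abs_add_le _ _).trans (add_le_add (h 0)
          ((Finset.abs_sum_le_sum_abs _ _).trans (Finset.sum_le_sum fun j _ => hterm j)))
    _ = (d + 1) * c := by
        rw [Finset.sum_const, Finset.card_univ, Fintype.card_fin, nsmul_eq_mul]; ring

lemma neg_mul_le_Yproc {d : ℕ} {η : Fin (d + 1) → ℝ → ℝ} {x : Fin d → ℝ}
    (hx : x ∈ unitCube d) {s a : ℝ} (ha : 0 ≤ a) (h : ∀ j, -a ≤ η j s) :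
    -((d + 1) * a) ≤ Yproc η x s := by
  have hterm : ∀ j : Fin d, -a ≤ x j * η j.succ s := fun j => by
    obtain ⟨hx0, hx1⟩ := mem_unitCube.1 hx j
    nlinarith [h j.succ]
  calc -((d + 1) * a) = -a + ∑ _j : Fin d, -a := by
        rw [Finset.sum_const, Finset.card_univ, Fintype.card_fin, nsmul_eq_mul]; ring
    _ ≤ Yproc η x s := add_le_add (h 0) (Finset.sum_le_sum fun j _ => hterm j)

def hazard {d : ℕ} (θ : ℝ × (Fin (d + 1) → ℝ → ℝ)) (x : Fin d → ℝ) (t : ℝ) : ℝ :=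
  θ.1 * sigmoid (Yproc θ.2 x t)

def cumHazard {d : ℕ} (θ : ℝ × (Fin (d + 1) → ℝ → ℝ)) (x : Fin d → ℝ) (t : ℝ) : ℝ :=
  ∫ s in (0:ℝ)..t, hazard θ x s

section Hazard

variable {d : ℕ} {θ θ' : ℝ × (Fin (d + 1) → ℝ → ℝ)} {x : Fin d → ℝ} {t : ℝ}

lemma dens_of_nonneg (ht : 0 ≤ t) :
    dens θ x t = hazard θ x t * Real.exp (-cumHazard θ x t) :=
  if_pos ht

lemma dens_of_neg (ht : t < 0) : dens θ x t = 0 :=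
  if_neg ht.not_ge

lemma hazard_pos (hΩ : 0 < θ.1) : 0 < hazard θ x t :=
  mul_pos hΩ (sigmoid_pos _)

lemma hazard_le (hΩ : 0 ≤ θ.1) : hazard θ x t ≤ θ.1 :=
  mul_le_of_le_one_right hΩ (sigmoid_le_one _)

lemma dens_nonneg (hΩ : 0 ≤ θ.1) : 0 ≤ dens θ x t := by
  rcases lt_or_ge t 0 with ht | ht
  · rw [dens_of_neg ht]
  · rw [dens_of_nonneg ht]
    exact mul_nonneg (mul_nonneg hΩ (sigmoid_pos _).le) (Real.exp_pos _).le

lemma log_dens_div_dens (hΩ : 0 < θ.1) (hΩ' : 0 < θ'.1) (ht : 0 ≤ t) :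
    Real.log (dens θ x t / dens θ' x t) =
      (Real.log θ.1 - Real.log θ'.1)
        + (Real.log (sigmoid (Yproc θ.2 x t)) - Real.log (sigmoid (Yproc θ'.2 x t)))
        + (cumHazard θ' x t - cumHazard θ x t) := by
  have hσ : ∀ y, sigmoid y ≠ 0 := fun y => (sigmoid_pos y).ne'
  rw [dens_of_nonneg ht, dens_of_nonneg ht,
    Real.log_div (mul_pos (hazard_pos hΩ) (Real.exp_pos _)).ne'
      (mul_pos (hazard_pos hΩ') (Real.exp_pos _)).ne', hazard, hazard,
    Real.log_mul (mul_ne_zero hΩ.ne' (hσ _)) (Real.exp_pos _).ne',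
    Real.log_mul (mul_ne_zero hΩ'.ne' (hσ _)) (Real.exp_pos _).ne',
    Real.log_mul hΩ.ne' (hσ _), Real.log_mul hΩ'.ne' (hσ _), Real.log_exp, Real.log_exp]
  ring

lemma continuousOn_hazard (hθ : ∀ j, ContinuousOn (θ.2 j) (Set.Ici 0)) :
    ContinuousOn (hazard θ x) (Set.Ici 0) := by
  have hY : ContinuousOn (Yproc θ.2 x) (Set.Ici 0) :=
    (hθ 0).add (continuousOn_finsetSum _ fun j _ => continuousOn_const.mul (hθ j.succ))
  exact continuousOn_const.mul
    (sigmoid_eq_real_sigmoid ▸ continuous_sigmoid.comp_continuousOn hY)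

lemma cumHazard_sub_le (hθ : ∀ j, ContinuousOn (θ.2 j) (Set.Ici 0))
    (hθ' : ∀ j, ContinuousOn (θ'.2 j) (Set.Ici 0)) (ht : 0 ≤ t) {C : ℝ}
    (hC : ∀ s ∈ Set.Icc 0 t, hazard θ x s - hazard θ' x s ≤ C) :
    cumHazard θ x t - cumHazard θ' x t ≤ C * t := by
  have hint : ∀ φ : ℝ × (Fin (d + 1) → ℝ → ℝ), (∀ j, ContinuousOn (φ.2 j) (Set.Ici 0)) →
      IntervalIntegrable (hazard φ x) volume 0 t := fun φ hφ =>
    ((continuousOn_hazard hφ).mono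
      (Set.uIcc_of_le ht ▸ Set.Icc_subset_Ici_self)).intervalIntegrable
  calc cumHazard θ x t - cumHazard θ' x t = ∫ s in (0:ℝ)..t, (hazard θ x s - hazard θ' x s) :=
        (intervalIntegral.integral_sub (hint θ hθ) (hint θ' hθ')).symm
    _ ≤ ∫ _s in (0:ℝ)..t, C :=
        intervalIntegral.integral_mono_on ht ((hint θ hθ).sub (hint θ' hθ'))
          intervalIntegrable_const hC
    _ = C * t := by simp [mul_comm]

end Hazard

/-- For `t > 1`, `h_d(t) = (d+1)/log(eᵗ-1)`, so `η_j(t) h_d(t) > -1` for all `j` gives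
`Y_x(t) ≥ -log(eᵗ-1)`, and `h_d` is built so that `σ(-log(eᵗ-1)) = e⁻ᵗ`. -/
lemma neg_le_log_sigmoid_Yproc {d : ℕ} {η : Fin (d + 1) → ℝ → ℝ} {x : Fin d → ℝ}
    (hx : x ∈ unitCube d) {t : ℝ} (ht : 1 < t)
    (h : ∀ j, ∃ c : ℝ, -1 < c ∧ c ≤ η j t * hfun d t) :
    -t ≤ Real.log (sigmoid (Yproc η x t)) := by
  set r := Real.log (Real.exp t - 1)
  have hr : 0 < r := log_exp_sub_one_pos ht
  have hd : (0:ℝ) < d + 1 := by positivity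
  have hη : ∀ j, -(r / (d + 1)) ≤ η j t := fun j => by
    obtain ⟨c, hc, hcη⟩ := h j
    rw [hfun_of_one_lt d ht, mul_div_assoc', le_div_iff₀ hr] at hcη
    rw [neg_le, le_div_iff₀ hd]
    nlinarith
  have hY : -r ≤ Yproc η x t := by
    simpa [mul_div_cancel₀ r hd.ne'] using neg_mul_le_Yproc hx (by positivity) hη
  calc -t = Real.log (sigmoid (-r)) := by
        rw [sigmoid_neg_log_exp_sub_one (by linarith), Real.log_exp]
    _ ≤ Real.log (sigmoid (Yproc η x t)) :=
        Real.log_le_log (sigmoid_pos _) (sigmoid_eq_real_sigmoid ▸ Real.sigmoid_le hY)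

section PointwiseBound

variable {d : ℕ} {Ω₀ : ℝ} {η₀ : Fin (d + 1) → ℝ → ℝ} {δ τ : ℝ}
  {θ : ℝ × (Fin (d + 1) → ℝ → ℝ)} {x : Fin d → ℝ} {t : ℝ}

lemma abs_Yproc_sub_le_of_memB (hB : memB Ω₀ η₀ δ τ θ) (hx : x ∈ unitCube d)
    (ht : t ∈ Set.Icc 0 τ) : |Yproc θ.2 x t - Yproc η₀ x t| ≤ (d + 1) * δ := by
  have hδ : 0 ≤ δ := (abs_nonneg _).trans hB.1.le
  refine (abs_Yproc_sub_le hx fun j => hB.2.1 j t ht).trans ?_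
  gcongr
  exact div_le_self hδ (by linarith [ht.1, ht.2])

lemma log_dens_div_le_of_le (hΩ₀ : 0 < Ω₀) (hη₀ : ∀ j, ContinuousOn (η₀ j) (Set.Ici 0))
    (hδ : δ ≤ 1/2) (hθ1 : 0 < θ.1) (hθ : ∀ j, ContinuousOn (θ.2 j) (Set.Ici 0))
    (hB : memB Ω₀ η₀ δ τ θ) (hx : x ∈ unitCube d) (ht : 0 ≤ t) (htτ : t ≤ τ) :
    Real.log (dens (Ω₀, η₀) x t / dens θ x t) ≤ δ * (d + 3) + δ * Ω₀ * (d + 2) * t := by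
  have hΩ := abs_sub_le_mul_of_abs_div_sub_one_lt hΩ₀ hB.1
  have hlogσ : Real.log (sigmoid (Yproc η₀ x t)) - Real.log (sigmoid (Yproc θ.2 x t))
      ≤ (d + 1) * δ :=
    (le_abs_self _).trans ((abs_log_sigmoid_sub_le _ _).trans
      (abs_sub_comm (Yproc η₀ x t) _ ▸ abs_Yproc_sub_le_of_memB hB hx ⟨ht, htτ⟩))
  have hΛ : cumHazard θ x t - cumHazard (Ω₀, η₀) x t ≤ δ * Ω₀ * (d + 2) * t := by
    refine cumHazard_sub_le hθ hη₀ ht fun s hs => ?_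
    have hσ := (abs_sigmoid_sub_le (Yproc θ.2 x s) (Yproc η₀ x s)).trans
      (abs_Yproc_sub_le_of_memB hB hx ⟨hs.1, hs.2.trans htτ⟩)
    have h1 : (θ.1 - Ω₀) * sigmoid (Yproc θ.2 x s) ≤ δ * Ω₀ := by
      nlinarith [le_abs_self (θ.1 - Ω₀), sigmoid_pos (Yproc θ.2 x s),
        sigmoid_le_one (Yproc θ.2 x s), abs_nonneg (θ.1 - Ω₀)]
    have h2 := mul_le_mul_of_nonneg_left ((le_abs_self _).trans hσ) hΩ₀.le
    simp only [hazard]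
    nlinarith
  rw [log_dens_div_dens hΩ₀ hθ1 ht]
  linarith [log_sub_log_le_two_mul hΩ₀ hδ hΩ]

lemma log_dens_div_le_of_lt (hΩ₀ : 0 < Ω₀) (hη₀ : ∀ j, ContinuousOn (η₀ j) (Set.Ici 0))
    (hδ : δ ≤ 1/2) (hθ1 : 0 < θ.1) (hθ : ∀ j, ContinuousOn (θ.2 j) (Set.Ici 0))
    (hB : memB Ω₀ η₀ δ τ θ) (hx : x ∈ unitCube d) (hτ : 1 < τ) (htτ : τ < t) :
    Real.log (dens (Ω₀, η₀) x t / dens θ x t) ≤ 2 * δ + (1 + 2 * Ω₀) * t := by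
  have ht : 0 ≤ t := by linarith
  have hΩ := abs_sub_le_mul_of_abs_div_sub_one_lt hΩ₀ hB.1
  have hlogσ₀ : Real.log (sigmoid (Yproc η₀ x t)) ≤ 0 :=
    Real.log_nonpos (sigmoid_pos _).le (sigmoid_le_one _)
  have hlogσ := neg_le_log_sigmoid_Yproc hx (hτ.trans htτ) fun j => by
    obtain ⟨c, hc, hcη⟩ := hB.2.2 j
    exact ⟨c, hc, hcη t htτ⟩
  have hΛ : cumHazard θ x t - cumHazard (Ω₀, η₀) x t ≤ θ.1 * t :=
    cumHazard_sub_le hθ hη₀ ht fun s _ => by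
      linarith [hazard_le (x := x) (t := s) hθ1.le,
        hazard_pos (θ := (Ω₀, η₀)) (x := x) (t := s) hΩ₀]
  have hθΩ : θ.1 * t ≤ 2 * Ω₀ * t :=
    mul_le_mul_of_nonneg_right (by nlinarith [(abs_le.1 hΩ).2]) ht
  rw [log_dens_div_dens hΩ₀ hθ1 ht]
  linarith [log_sub_log_le_two_mul hΩ₀ hδ hΩ]

lemma log_dens_div_mul_dens_le (hΩ₀ : 0 < Ω₀) (hη₀ : ∀ j, ContinuousOn (η₀ j) (Set.Ici 0))
    (hδ : δ ≤ 1/2) (hτ : 1 < τ) (hθ1 : 0 < θ.1) (hθ : ∀ j, ContinuousOn (θ.2 j) (Set.Ici 0))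
    (hB : memB Ω₀ η₀ δ τ θ) (hx : x ∈ unitCube d) (t : ℝ) :
    Real.log (dens (Ω₀, η₀) x t / dens θ x t) * dens (Ω₀, η₀) x t ≤
      δ * ((d + 3) * (1 + 2 * Ω₀)) * dens (Ω₀, η₀) x t
        + δ * ((d + 3) * (1 + 2 * Ω₀)) * (t * dens (Ω₀, η₀) x t)
        + (d + 3) * (1 + 2 * Ω₀) * (Set.Ioi τ).indicator (fun t => t * dens (Ω₀, η₀) x t) t := by
  rcases lt_or_ge t 0 with ht | ht
  · simp [Set.indicator_apply, dens_of_neg ht]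
  set A : ℝ := (d + 3) * (1 + 2 * Ω₀)
  have hδ0 : 0 ≤ δ := (abs_nonneg _).trans hB.1.le
  have hA3 : (d:ℝ) + 3 ≤ A := le_mul_of_one_le_right (by positivity) (by linarith)
  have hAΩ : Ω₀ * (d + 2) ≤ A := by nlinarith
  have hA1 : 1 + 2 * Ω₀ ≤ A := le_mul_of_one_le_left (by positivity) (by linarith)
  have hbound : Real.log (dens (Ω₀, η₀) x t / dens θ x t) ≤
      δ * A + δ * A * t + A * (Set.Ioi τ).indicator id t := by
    rcases le_or_gt t τ with htτ | htτ
    · rw [Set.indicator_of_notMem (by simpa using htτ)]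
      have := log_dens_div_le_of_le hΩ₀ hη₀ hδ hθ1 hθ hB hx ht htτ
      nlinarith [mul_le_mul_of_nonneg_left hA3 hδ0,
        mul_le_mul_of_nonneg_left hAΩ (mul_nonneg hδ0 ht)]
    · rw [Set.indicator_of_mem (Set.mem_Ioi.2 htτ), id]
      have := log_dens_div_le_of_lt hΩ₀ hη₀ hδ hθ1 hθ hB hx hτ htτ
      nlinarith [mul_le_mul_of_nonneg_left hA3 hδ0, mul_le_mul_of_nonneg_right hA1 ht,
        mul_nonneg (mul_nonneg hδ0 (by positivity : (0:ℝ) ≤ A)) ht]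
  calc Real.log (dens (Ω₀, η₀) x t / dens θ x t) * dens (Ω₀, η₀) x t
      ≤ (δ * A + δ * A * t + A * (Set.Ioi τ).indicator id t) * dens (Ω₀, η₀) x t :=
        mul_le_mul_of_nonneg_right hbound (dens_nonneg hΩ₀.le)
    _ = _ := by
        by_cases hmem : t ∈ Set.Ioi τ
        · simp only [Set.indicator_of_mem hmem, id]; ring
        · simp only [Set.indicator_of_notMem hmem]; ring

end PointwiseBound

section Measurability

variable {d : ℕ} {θ : ℝ × (Fin (d + 1) → ℝ → ℝ)}

lemma continuous_hazard_uncurry (hθ : ∀ j, Continuous (θ.2 j)) :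
    Continuous fun p : (Fin d → ℝ) × ℝ => hazard θ p.1 p.2 := by
  simp only [hazard, Yproc, sigmoid_eq_real_sigmoid]
  fun_prop

lemma measurable_dens_uncurry_of_continuous (hθ : ∀ j, Continuous (θ.2 j)) :
    Measurable fun p : (Fin d → ℝ) × ℝ => dens θ p.1 p.2 := by
  have hΛ : Continuous fun p : (Fin d → ℝ) × ℝ => cumHazard θ p.1 p.2 :=
    intervalIntegral.continuous_parametric_primitive_of_continuous
      (f := hazard θ) (continuous_hazard_uncurry hθ)
  refine Measurable.ite (measurableSet_le measurable_const measurable_snd) ?_ measurable_const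
  exact ((continuous_hazard_uncurry hθ).mul (hΛ.neg.rexp)).measurable

/-- Only the values of `η_j` on `[0, ∞)` enter `dens`, so they may be extended continuously to
`ℝ` by `η_j(max t 0)`. -/
lemma dens_eq_dens_max : dens θ = dens (θ.1, fun j s => θ.2 j (max s 0)) := by
  ext x t
  have hY : ∀ s, 0 ≤ s → Yproc (fun j s => θ.2 j (max s 0)) x s = Yproc θ.2 x s := by
    intro s hs; simp [Yproc, max_eq_left hs]
  rcases lt_or_ge t 0 with ht | ht
  · rw [dens_of_neg ht, dens_of_neg ht]
  rw [dens_of_nonneg ht, dens_of_nonneg ht, cumHazard, cumHazard, hazard, hazard, hY t ht]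
  congr 3
  refine intervalIntegral.integral_congr fun s hs => ?_
  rw [Set.uIcc_of_le ht] at hs
  simp only [hazard, hY s hs.1]

lemma measurable_dens_uncurry (hθ : ∀ j, ContinuousOn (θ.2 j) (Set.Ici 0)) :
    Measurable fun p : (Fin d → ℝ) × ℝ => dens θ p.1 p.2 := by
  rw [dens_eq_dens_max]
  exact measurable_dens_uncurry_of_continuous fun j =>
    (hθ j).comp_continuous (continuous_id.max continuous_const) fun t => le_max_right t 0

end Measurability

lemma integral_le_integral_of_ae_le_of_nonneg {α : Type*} [MeasurableSpace α] {μ : Measure α}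
    {f g : α → ℝ} (hg : Integrable g μ) (hg0 : 0 ≤ᵐ[μ] g) (hfg : f ≤ᵐ[μ] g) :
    ∫ a, f a ∂μ ≤ ∫ a, g a ∂μ := by
  by_cases hf : Integrable f μ
  · exact integral_mono_ae hf hg hfg
  · rw [integral_undef hf]
    exact integral_nonneg_of_ae hg0

section Tail

variable {α : Type*} {F : α × ℝ → ℝ}

lemma setIntegral_Ioi_eq_integral_indicator (τ : ℝ) (x : α) :
    ∫ t in Set.Ioi τ, F (x, t) = ∫ t, (Prod.snd ⁻¹' Set.Ioi τ).indicator F (x, t) := by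
  rw [← integral_indicator measurableSet_Ioi]
  rfl

variable [MeasurableSpace α] {μ : Measure α}

lemma MeasureTheory.Integrable.integrable_setIntegral_Ioi (hF : Integrable F (μ.prod volume))
    (τ : ℝ) :
    Integrable (fun x => ∫ t in Set.Ioi τ, F (x, t)) μ := by
  simp only [setIntegral_Ioi_eq_integral_indicator]
  exact (hF.indicator (measurable_snd measurableSet_Ioi)).integral_prod_left

lemma tendsto_integral_setIntegral_Ioi_atTop [SFinite μ] (hF : Integrable F (μ.prod volume)) :
    Tendsto (fun τ : ℝ => ∫ x, (∫ t in Set.Ioi τ, F (x, t)) ∂μ) atTop (𝓝 0) := by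
  simp only [setIntegral_Ioi_eq_integral_indicator]
  have hind : ∀ τ : ℝ, Integrable ((Prod.snd ⁻¹' Set.Ioi τ).indicator F) (μ.prod volume) :=
    fun τ => hF.indicator (measurable_snd measurableSet_Ioi)
  simp_rw [← fun τ => integral_prod _ (hind τ)]
  rw [← integral_zero (α × ℝ) ℝ]
  refine tendsto_integral_filter_of_dominated_convergence (fun p => ‖F p‖)
    (Eventually.of_forall fun τ => (hind τ).aestronglyMeasurable)
    (Eventually.of_forall fun τ => ae_of_all _ fun p => norm_indicator_le_norm_self _ _)
    hF.norm (ae_of_all _ fun p => ?_)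
  refine tendsto_const_nhds.congr' ?_
  filter_upwards [eventually_ge_atTop p.2] with τ hτ
  exact (Set.indicator_of_notMem (by simpa using hτ) _).symm

end Tail

section Integration

variable {d : ℕ} {Ω₀ : ℝ} {η₀ : Fin (d + 1) → ℝ → ℝ} {δ τ : ℝ}
  {θ : ℝ × (Fin (d + 1) → ℝ → ℝ)} {Q : Measure (Fin d → ℝ)}

lemma mul_dens_nonneg (hΩ : 0 ≤ θ.1) (x : Fin d → ℝ) (t : ℝ) : 0 ≤ t * dens θ x t := by
  rcases lt_or_ge t 0 with ht | ht
  · rw [dens_of_neg ht, mul_zero]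
  · exact mul_nonneg ht (dens_nonneg hΩ)

lemma integral_mul_dens_nonneg (hΩ : 0 ≤ θ.1) (x : Fin d → ℝ) (μ : Measure ℝ) :
    0 ≤ ∫ t, t * dens θ x t ∂μ :=
  integral_nonneg (mul_dens_nonneg hΩ x)

lemma integrable_mul_dens_prod [SFinite Q] (hΩ : 0 ≤ θ.1)
    (hθ : ∀ j, ContinuousOn (θ.2 j) (Set.Ici 0))
    (h : (∫⁻ x, ∫⁻ t in Set.Ici (0:ℝ), ENNReal.ofReal (t * dens θ x t) ∂volume ∂Q) < ⊤) :
    Integrable (fun p : (Fin d → ℝ) × ℝ => p.2 * dens θ p.1 p.2) (Q.prod volume) := by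
  have hmeas : Measurable fun p : (Fin d → ℝ) × ℝ => p.2 * dens θ p.1 p.2 :=
    measurable_snd.mul (measurable_dens_uncurry hθ)
  refine ⟨hmeas.aestronglyMeasurable, ?_⟩
  rw [hasFiniteIntegral_iff_ofReal (f := fun p : (Fin d → ℝ) × ℝ => p.2 * dens θ p.1 p.2)
      (ae_of_all _ fun p => mul_dens_nonneg hΩ p.1 p.2),
    lintegral_prod _ hmeas.ennreal_ofReal.aemeasurable]
  refine lt_of_eq_of_lt (lintegral_congr fun x => ?_) h
  refine (setLIntegral_eq_of_support_subset fun t ht => ?_).symm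
  by_contra hneg
  exact ht (by simp [dens_of_neg (not_le.1 hneg)])

lemma integral_log_dens_div_mul_dens_le {x : Fin d → ℝ}
    (hΩ₀ : 0 < Ω₀) (hη₀ : ∀ j, ContinuousOn (η₀ j) (Set.Ici 0))
    (hδ : δ ≤ 1/2) (hτ : 1 < τ) (hθ1 : 0 < θ.1) (hθ : ∀ j, ContinuousOn (θ.2 j) (Set.Ici 0))
    (hB : memB Ω₀ η₀ δ τ θ) (hx : x ∈ unitCube d) (hdens : ∫ t, dens (Ω₀, η₀) x t = 1)
    (hmom : Integrable fun t => t * dens (Ω₀, η₀) x t) :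
    ∫ t in Set.Ici (0:ℝ), Real.log (dens (Ω₀, η₀) x t / dens θ x t) * dens (Ω₀, η₀) x t ≤
      δ * ((d + 3) * (1 + 2 * Ω₀)) * (1 + ∫ t, t * dens (Ω₀, η₀) x t)
        + (d + 3) * (1 + 2 * Ω₀) * ∫ t in Set.Ioi τ, t * dens (Ω₀, η₀) x t := by
  set A : ℝ := (d + 3) * (1 + 2 * Ω₀)
  have hA : 0 ≤ A := by positivity
  have hδ0 : 0 ≤ δ := (abs_nonneg _).trans hB.1.le
  rw [setIntegral_eq_integral_of_forall_compl_eq_zero fun t ht => by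
    rw [dens_of_neg (by simpa using ht), mul_zero]]
  have h1 : Integrable fun t => δ * A * dens (Ω₀, η₀) x t :=
    (integrable_of_integral_eq_one hdens).const_mul _
  have h2 : Integrable fun t => δ * A * (t * dens (Ω₀, η₀) x t) := hmom.const_mul _
  have h12 : Integrable fun t => δ * A * dens (Ω₀, η₀) x t + δ * A * (t * dens (Ω₀, η₀) x t) :=
    h1.add h2
  have h3 : Integrable fun t => A * (Set.Ioi τ).indicator (fun t => t * dens (Ω₀, η₀) x t) t :=
    (hmom.indicator measurableSet_Ioi).const_mul _
  calc ∫ t, Real.log (dens (Ω₀, η₀) x t / dens θ x t) * dens (Ω₀, η₀) x t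
      ≤ ∫ t, (δ * A * dens (Ω₀, η₀) x t + δ * A * (t * dens (Ω₀, η₀) x t)
          + A * (Set.Ioi τ).indicator (fun t => t * dens (Ω₀, η₀) x t) t) :=
        integral_le_integral_of_ae_le_of_nonneg
          (h12.add h3)
          (ae_of_all _ fun t => add_nonneg (add_nonneg
            (mul_nonneg (mul_nonneg hδ0 hA) (dens_nonneg hΩ₀.le))
            (mul_nonneg (mul_nonneg hδ0 hA) (mul_dens_nonneg hΩ₀.le x t)))
            (mul_nonneg hA (Set.indicator_nonneg
              (fun t _ => mul_dens_nonneg (θ := (Ω₀, η₀)) hΩ₀.le x t) t)))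
          (ae_of_all _ (log_dens_div_mul_dens_le hΩ₀ hη₀ hδ hτ hθ1 hθ hB hx))
    _ = _ := by
        rw [integral_add h12 h3, integral_add h1 h2, integral_const_mul,
          integral_const_mul, integral_const_mul, hdens, integral_indicator measurableSet_Ioi]
        ring

lemma integral_integral_log_dens_div_mul_dens_le [IsProbabilityMeasure Q] (hΩ₀ : 0 < Ω₀)
    (hη₀ : ∀ j, ContinuousOn (η₀ j) (Set.Ici 0)) (hQ : Q (unitCube d) = 1)
    (hdens₀ : ∀ x ∈ unitCube d, ∫ t, dens (Ω₀, η₀) x t = 1)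
    (hF : Integrable (fun p : (Fin d → ℝ) × ℝ => p.2 * dens (Ω₀, η₀) p.1 p.2) (Q.prod volume))
    (hδ : δ ≤ 1/2) (hτ : 1 < τ) (hθ1 : 0 < θ.1) (hθ : ∀ j, ContinuousOn (θ.2 j) (Set.Ici 0))
    (hB : memB Ω₀ η₀ δ τ θ) :
    ∫ x, (∫ t in Set.Ici (0:ℝ),
        Real.log (dens (Ω₀, η₀) x t / dens θ x t) * dens (Ω₀, η₀) x t) ∂Q ≤
      δ * ((d + 3) * (1 + 2 * Ω₀)) * (1 + ∫ x, (∫ t, t * dens (Ω₀, η₀) x t) ∂Q)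
        + (d + 3) * (1 + 2 * Ω₀) * ∫ x, (∫ t in Set.Ioi τ, t * dens (Ω₀, η₀) x t) ∂Q := by
  set A : ℝ := (d + 3) * (1 + 2 * Ω₀)
  have hA : 0 ≤ A := by positivity
  have hδ0 : 0 ≤ δ := (abs_nonneg _).trans hB.1.le
  have hcube : ∀ᵐ x ∂Q, x ∈ unitCube d :=
    (mem_ae_iff_prob_eq_one (MeasurableSet.univ_pi fun _ => measurableSet_Icc)).2 hQ
  have h1 : Integrable (fun x => δ * A) Q := integrable_const _
  have h2 : Integrable (fun x => δ * A * ∫ t, t * dens (Ω₀, η₀) x t) Q :=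
    hF.integral_prod_left.const_mul _
  have h12 : Integrable (fun x => δ * A + δ * A * ∫ t, t * dens (Ω₀, η₀) x t) Q := h1.add h2
  have h3 : Integrable (fun x => A * ∫ t in Set.Ioi τ, t * dens (Ω₀, η₀) x t) Q :=
    (hF.integrable_setIntegral_Ioi τ).const_mul _
  calc _ ≤ ∫ x, (δ * A + δ * A * (∫ t, t * dens (Ω₀, η₀) x t)
          + A * ∫ t in Set.Ioi τ, t * dens (Ω₀, η₀) x t) ∂Q := by
        refine integral_le_integral_of_ae_le_of_nonneg (h12.add h3) (ae_of_all _ fun x => ?_) ?_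
        · have := integral_mul_dens_nonneg (θ := (Ω₀, η₀)) hΩ₀.le x volume
          have := integral_mul_dens_nonneg (θ := (Ω₀, η₀)) hΩ₀.le x (volume.restrict (Set.Ioi τ))
          simp only [Pi.zero_apply]
          positivity
        · filter_upwards [hcube, hF.prod_right_ae] with x hx hmom
          exact (integral_log_dens_div_mul_dens_le hΩ₀ hη₀ hδ hτ hθ1 hθ hB hx
            (hdens₀ x hx) hmom).trans_eq (by ring)
    _ = _ := by
        rw [integral_add h12 h3, integral_add h1 h2, integral_const, integral_const_mul,
          integral_const_mul, probReal_univ, one_smul]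
        ring

end Integration

theorem KL_neighbourhood_random_design_general
    {d : ℕ}
    (Ω₀ : ℝ) (hΩ₀ : 0 < Ω₀)
    (η₀ : Fin (d + 1) → ℝ → ℝ)
    (hη₀cont : ∀ j, ContinuousOn (η₀ j) (Set.Ici 0))
    (Q : Measure (Fin d → ℝ)) [IsProbabilityMeasure Q]
    (hQsupp : Q (unitCube d) = 1)
    (hdens₀ : ∀ x ∈ unitCube d, ∫ t, dens (Ω₀, η₀) x t = 1)
    (hA3 : (∫⁻ x, ∫⁻ t in Set.Ici (0:ℝ),
        ENNReal.ofReal (t * dens (Ω₀, η₀) x t) ∂volume ∂Q) < ⊤) :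
    ∀ ε ∈ Set.Ioo (0:ℝ) 1, ∃ δ ∈ Set.Ioo (0:ℝ) (1/2), ∃ τ₀ > (1:ℝ), ∀ τ : ℝ, τ₀ ≤ τ →
      ∀ θ : ℝ × (Fin (d + 1) → ℝ → ℝ), 0 < θ.1 →
        (∀ j, ContinuousOn (θ.2 j) (Set.Ici 0)) →
        memB Ω₀ η₀ δ τ θ →
        (∫ x, (∫ t in Set.Ici (0:ℝ),
            Real.log (dens (Ω₀, η₀) x t / dens θ x t) * dens (Ω₀, η₀) x t) ∂Q) < ε := by
  rintro ε ⟨hε, -⟩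
  set A : ℝ := (d + 3) * (1 + 2 * Ω₀)
  have hA : 0 < A := by positivity
  have hF := integrable_mul_dens_prod (θ := (Ω₀, η₀)) hΩ₀.le hη₀cont hA3
  set m := ∫ x, (∫ t, t * dens (Ω₀, η₀) x t) ∂Q
  have hm : 0 ≤ m := integral_nonneg fun x => integral_mul_dens_nonneg hΩ₀.le x volume
  obtain ⟨τ₁, hτ₁⟩ := eventually_atTop.1 <|
    (tendsto_integral_setIntegral_Ioi_atTop hF).eventually
      (gt_mem_nhds (show (0:ℝ) < ε / (2 * A) by positivity))
  set δ := min (1/4) (ε / 4 / (A * (1 + m)))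
  have hδ : δ ≤ 1/4 := min_le_left _ _
  have hδm : δ * (A * (1 + m)) ≤ ε / 4 := (le_div_iff₀ (by positivity)).1 (min_le_right _ _)
  refine ⟨δ, ⟨by positivity, by linarith⟩, max τ₁ 2, lt_max_of_lt_right one_lt_two,
    fun τ hτ θ hθ1 hθ hB => ?_⟩
  have htail := hτ₁ τ ((le_max_left _ _).trans hτ)
  rw [lt_div_iff₀ (by positivity)] at htail
  calc _ ≤ δ * A * (1 + m) + A * ∫ x, (∫ t in Set.Ioi τ, t * dens (Ω₀, η₀) x t) ∂Q :=
        integral_integral_log_dens_div_mul_dens_le hΩ₀ hη₀cont hQsupp hdens₀ hF (by linarith)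
          (by linarith [le_max_right τ₁ 2]) hθ1 hθ hB
    _ < ε := by linarith

/-- Lemma 5 of the paper (random design): under (A3), for every `ε ∈ (0,1)` there are
`δ(ε) ∈ (0,1/2)` and `τ(ε) > 1` such that for every `τ ≥ τ(ε)` and every `θ ∈ B_{δ(ε),τ}`,
the Kullback–Leibler divergence `E_{θ₀}[log (f_X(T,θ₀)/f_X(T,θ))] < ε`. -/
theorem KL_neighbourhood_random_design
    {d : ℕ} (hd1 : 1 ≤ d)
    (Ω₀ : ℝ) (hΩ₀ : 0 < Ω₀)
    (η₀ : Fin (d + 1) → ℝ → ℝ)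
    (hη₀cont : ∀ j, ContinuousOn (η₀ j) (Set.Ici 0))
    (Q : Measure (Fin d → ℝ)) [IsProbabilityMeasure Q]
    (hQsupp : Q (unitCube d) = 1)
    (hdens₀ : ∀ x ∈ unitCube d, ∫ t, dens (Ω₀, η₀) x t = 1)
    (hA3 : (∫⁻ x, ∫⁻ t in Set.Ici (0:ℝ),
        ENNReal.ofReal (t * dens (Ω₀, η₀) x t) ∂volume ∂Q) < ⊤) :
    ∀ ε ∈ Set.Ioo (0:ℝ) 1, ∃ δ ∈ Set.Ioo (0:ℝ) (1/2), ∃ τ₀ > (1:ℝ), ∀ τ : ℝ, τ₀ ≤ τ →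
      ∀ θ : ℝ × (Fin (d + 1) → ℝ → ℝ), 0 < θ.1 →
        (∀ j, ContinuousOn (θ.2 j) (Set.Ici 0)) →
        memB Ω₀ η₀ δ τ θ →
        (∫ x, (∫ t in Set.Ici (0:ℝ),
            Real.log (dens (Ω₀, η₀) x t / dens θ x t) * dens (Ω₀, η₀) x t) ∂Q) < ε :=
  KL_neighbourhood_random_design_general Ω₀ hΩ₀ η₀ hη₀cont Q hQsupp hdens₀ hA3

end
end

section
/- Let τ > 0 and let η be a continuous real-valued function on the interval [0,τ]. For n ≥ 1 and k ∈ {0,…,2^n}, set t^n_k = kτ/2^n. Then sup_{t∈[0,τ]} |η(t)| ≤ |η(0)| + |η(τ)| + Σ_{n=1}^∞ max_{0≤k≤2^n−1} |η(t^n_{k+1}) − η(t^n_k)|, where the right-hand side is allowed to equal +∞. -/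
/-!
Approximate `t ∈ [0, τ]` from below by the dyadic points `p n = ⌊2ⁿ t / τ⌋ τ / 2ⁿ`.
Since `⌊2y⌋ ∈ {2⌊y⌋, 2⌊y⌋ + 1}`, passing from `p n` to `p (n + 1)` either stays put or crosses
exactly one dyadic interval of generation `n + 1`, so `|η (p m)|` is at most `|η (p 0)|` plus the
first `m` maximal increments, with `p 0 ∈ {0, τ}`. As `p m → t`, continuity of `η` at `t` finishes.
-/

open scoped ENNReal

open Filter Topology Finset

theorem Nat.floor_two_mul_eq_or {R : Type*} [Semiring R] [LinearOrder R] [IsStrictOrderedRing R]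
    [FloorSemiring R] {x : R} (hx : 0 ≤ x) :
    ⌊2 * x⌋₊ = 2 * ⌊x⌋₊ ∨ ⌊2 * x⌋₊ = 2 * ⌊x⌋₊ + 1 := by
  have hlo : 2 * ⌊x⌋₊ ≤ ⌊2 * x⌋₊ :=
    Nat.le_floor <| by push_cast; exact mul_le_mul_of_nonneg_left (Nat.floor_le hx) zero_le_two
  have hhi : ⌊2 * x⌋₊ < 2 * ⌊x⌋₊ + 2 := by
    rw [Nat.floor_lt (by positivity)]
    push_cast
    simpa [mul_add] using mul_lt_mul_of_pos_left (Nat.lt_floor_add_one x) zero_lt_two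
  omega

theorem Nat.floor_mul_le_of_le_one {R : Type*} [Semiring R] [LinearOrder R] [IsStrictOrderedRing R]
    [FloorSemiring R] {x : R} (hx : x ≤ 1) (n : ℕ) : ⌊x * n⌋₊ ≤ n := by
  simpa using Nat.floor_le_floor (mul_le_of_le_one_left n.cast_nonneg hx)

theorem tendsto_floor_mul_two_pow_mul_div {x : ℝ} (hx : 0 ≤ x) (τ : ℝ) :
    Tendsto (fun n : ℕ ↦ (⌊x * 2 ^ n⌋₊ : ℝ) * τ / 2 ^ n) atTop (𝓝 (x * τ)) := by
  have h := (tendsto_nat_floor_mul_div_atTop hx).comp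
    (tendsto_pow_atTop_atTop_of_one_lt (one_lt_two (α := ℝ)))
  simpa only [Function.comp_def, mul_div_right_comm] using h.mul_const τ

theorem floor_mul_two_pow_mul_div_mem_Icc {x τ : ℝ} (hx : x ≤ 1) (hτ : 0 ≤ τ) (n : ℕ) :
    (⌊x * 2 ^ n⌋₊ : ℝ) * τ / 2 ^ n ∈ Set.Icc 0 τ := by
  refine ⟨by positivity, div_le_of_le_mul₀ (by positivity) hτ ?_⟩
  rw [mul_comm]
  exact mul_le_mul_of_nonneg_left (mod_cast Nat.floor_mul_le_of_le_one hx (2 ^ n)) hτ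

theorem nnnorm_le_add_sum_of_nnnorm_sub_le {E : Type*} [SeminormedAddCommGroup E] {v : ℕ → E}
    {M : ℕ → ℝ≥0∞} (h : ∀ n, (‖v (n + 1) - v n‖₊ : ℝ≥0∞) ≤ M n) (m : ℕ) :
    (‖v m‖₊ : ℝ≥0∞) ≤ ‖v 0‖₊ + ∑ j ∈ range m, M j := by
  induction m with
  | zero => simp
  | succ m ih =>
    calc (‖v (m + 1)‖₊ : ℝ≥0∞) ≤ ‖v m‖₊ + ‖v (m + 1) - v m‖₊ := by
          exact_mod_cast nnnorm_le_nnnorm_add_nnnorm_sub' _ _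
      _ ≤ ‖v 0‖₊ + ∑ j ∈ range m, M j + M m := add_le_add ih (h m)
      _ = ‖v 0‖₊ + ∑ j ∈ range (m + 1), M j := by rw [sum_range_succ, add_assoc]

theorem nnnorm_sub_le_iSup_dyadic_increment {E : Type*} [SeminormedAddCommGroup E] (f : ℝ → E)
    (τ : ℝ) {n a b : ℕ} (hb : b ≤ 2 ^ (n + 1)) (hab : b = 2 * a ∨ b = 2 * a + 1) :
    (‖f (b * τ / 2 ^ (n + 1)) - f (a * τ / 2 ^ n)‖₊ : ℝ≥0∞) ≤
      ⨆ k : Fin (2 ^ (n + 1)),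
        (‖f (((k : ℕ) + 1) * τ / 2 ^ (n + 1)) - f ((k : ℕ) * τ / 2 ^ (n + 1))‖₊ : ℝ≥0∞) := by
  have ha : (a : ℝ) * τ / 2 ^ n = ((2 * a : ℕ) : ℝ) * τ / 2 ^ (n + 1) := by
    push_cast; field_simp; ring
  rcases hab with rfl | rfl
  · simp [ha]
  · refine le_iSup_of_le (⟨2 * a, by omega⟩ : Fin (2 ^ (n + 1))) ?_
    rw [ha]
    push_cast
    rfl

theorem sup_le_dyadic_increments_general
    (τ : ℝ) (η : ℝ → ℝ) (hcont : ContinuousOn η (Set.Icc 0 τ)) :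
    (⨆ t : Set.Icc (0:ℝ) τ, (‖η (t : ℝ)‖₊ : ℝ≥0∞)) ≤
      (‖η 0‖₊ : ℝ≥0∞) + (‖η τ‖₊ : ℝ≥0∞) +
      ∑' n : ℕ, ⨆ k : Fin (2^(n+1)),
        (‖η (((k : ℕ) + 1) * τ / 2^(n+1)) - η ((k : ℕ) * τ / 2^(n+1))‖₊ : ℝ≥0∞) := by
  refine iSup_le fun ⟨t, ht0, htτ⟩ ↦ ?_
  have hτ : 0 ≤ τ := ht0.trans htτ
  set x := t / τ
  have hx0 : 0 ≤ x := div_nonneg ht0 hτ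
  have hx1 : x ≤ 1 := div_le_one_of_le₀ htτ hτ
  have hxτ : x * τ = t := by
    rcases hτ.eq_or_lt with rfl | hτ
    · simp [le_antisymm htτ ht0]
    · exact div_mul_cancel₀ t hτ.ne'
  set p : ℕ → ℝ := fun n ↦ (⌊x * 2 ^ n⌋₊ : ℝ) * τ / 2 ^ n
  have hp_mem : ∀ n, p n ∈ Set.Icc 0 τ := floor_mul_two_pow_mul_div_mem_Icc hx1 hτ
  have h_lim : Tendsto (fun n ↦ (‖η (p n)‖₊ : ℝ≥0∞)) atTop (𝓝 ‖η t‖₊) := by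
    have hp : Tendsto p atTop (𝓝[Set.Icc 0 τ] t) := tendsto_nhdsWithin_iff.2
      ⟨hxτ ▸ tendsto_floor_mul_two_pow_mul_div hx0 τ, .of_forall hp_mem⟩
    exact ENNReal.tendsto_coe.2 ((hcont t ⟨ht0, htτ⟩).tendsto.comp hp).nnnorm
  have h_start : (‖η (p 0)‖₊ : ℝ≥0∞) ≤ ‖η 0‖₊ + ‖η τ‖₊ := by
    have : ⌊x⌋₊ ≤ 1 := by simpa using Nat.floor_mul_le_of_le_one hx1 1
    interval_cases h : ⌊x⌋₊ <;> simp [p, h]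
  have h_step : ∀ n, (‖η (p (n + 1)) - η (p n)‖₊ : ℝ≥0∞) ≤ ⨆ k : Fin (2 ^ (n + 1)),
      (‖η (((k : ℕ) + 1) * τ / 2 ^ (n + 1)) - η ((k : ℕ) * τ / 2 ^ (n + 1))‖₊ : ℝ≥0∞) :=
    fun n ↦ nnnorm_sub_le_iSup_dyadic_increment η τ
      (mod_cast Nat.floor_mul_le_of_le_one hx1 (2 ^ (n + 1)))
      (by rw [show x * 2 ^ (n + 1) = 2 * (x * 2 ^ n) by ring]
          exact Nat.floor_two_mul_eq_or (by positivity))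
  refine le_of_tendsto' h_lim fun m ↦ ?_
  calc (‖η (p m)‖₊ : ℝ≥0∞) ≤ ‖η (p 0)‖₊ + ∑ j ∈ range m, _ :=
        nnnorm_le_add_sum_of_nnnorm_sub_le (v := fun n ↦ η (p n)) h_step m
    _ ≤ _ := add_le_add h_start (ENNReal.sum_le_tsum _)

/-- Dyadic chaining bound: for `η` continuous on `[0,τ]`, with dyadic points
`t^n_k = kτ/2^n`, one has
`sup_{t∈[0,τ]} |η(t)| ≤ |η(0)| + |η(τ)| + ∑_{n≥1} max_{0≤k≤2^n-1} |η(t^n_{k+1}) - η(t^n_k)|`,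
the inequality being stated in `ℝ≥0∞` so that the right-hand side may equal `+∞`. -/
theorem sup_le_dyadic_increments
    (τ : ℝ) (hτ : 0 < τ) (η : ℝ → ℝ) (hcont : ContinuousOn η (Set.Icc 0 τ)) :
    (⨆ t : Set.Icc (0:ℝ) τ, (‖η (t : ℝ)‖₊ : ℝ≥0∞)) ≤
      (‖η 0‖₊ : ℝ≥0∞) + (‖η τ‖₊ : ℝ≥0∞) +
      ∑' n : ℕ, ⨆ k : Fin (2^(n+1)),
        (‖η (((k : ℕ) + 1) * τ / 2^(n+1)) - η ((k : ℕ) * τ / 2^(n+1))‖₊ : ℝ≥0∞) :=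
  sup_le_dyadic_increments_general τ η hcont
end
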